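/- Let n ≥ 1 and let v, q : Fin n → ℝ be positive antitone sequences, and let p* : Fin n → ℝ be the recursively defined envy-free prices. Then p* maximizes the seller's revenue among all envy-free price vectors for the identity allocation: for every envy-free p for the identity allocation, ∑_{j} p j ≤ ∑_{j} p* j. -/
import Mathlib


/-- Maximum of `f i` over indices `i > k`, well defined when `(k : ℕ) < n - 1`. -/
noncomputable def maxAbove {n : ℕ} (k : Fin n) (hk : (k : ℕ) < n - 1) (f : Fin n → ℝ) : ℝ :=
  (Finset.univ.filter fun i => k < i).sup'
    ⟨⟨(k : ℕ) + 1, by omega⟩, by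
      simp only [Finset.mem_filter, Finset.mem_univ, true_and, Fin.lt_def]
      omega⟩ f

/-- The recursively defined prices `p*` maximize the seller's revenue among
all envy-free price vectors for the identity allocation. -/
theorem pstar_revenue_optimal (n : ℕ) (hn : 1 ≤ n) (v q : Fin n → ℝ)
    (hvpos : ∀ i, 0 < v i) (hqpos : ∀ i, 0 < q i)
    (hv : Antitone v) (hq : Antitone q)
    (pstar : Fin n → ℝ)
    (hlast : pstar ⟨n - 1, by omega⟩ = v ⟨n - 1, by omega⟩ * q ⟨n - 1, by omega⟩)
    (hrec : ∀ (k : Fin n) (hk : (k : ℕ) < n - 1),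
      pstar k = v k * q k - maxAbove k hk (fun i => v k * q i - pstar i)) :
    ∀ p : Fin n → ℝ,
      (∀ i, p i ≤ v i * q i) →
      (∀ i j : Fin n, v i * q i - p i ≥ v i * q j - p j) →
      ∑ j, p j ≤ ∑ j, pstar j := by
  intro p hIR hEF
  have key : ∀ m : ℕ, ∀ k : Fin n, n - 1 - (k : ℕ) ≤ m → p k ≤ pstar k := by
    intro m
    induction m with
    | zero =>
      intro k hkm
      have hk : (k : ℕ) = n - 1 := by have := k.2; omega
      have : k = ⟨n - 1, by omega⟩ := Fin.ext hk
      rw [this, hlast]; exact hIR _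
    | succ m ih =>
      intro k hkm
      by_cases hk : (k : ℕ) < n - 1
      · rw [hrec k hk]
        obtain ⟨i, hi, heq⟩ := Finset.exists_mem_eq_sup'
          (⟨⟨(k : ℕ) + 1, by omega⟩, by
            simp only [Finset.mem_filter, Finset.mem_univ, true_and, Fin.lt_def]
            omega⟩ : (Finset.univ.filter fun i => k < i).Nonempty)
          (fun i => v k * q i - pstar i)
        simp only [Finset.mem_filter, Finset.mem_univ, true_and] at hi
        have hpi : p i ≤ pstar i := by
          apply ih
          have : (k : ℕ) < (i : ℕ) := hi
          omega
        have hEFi := hEF k i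
        have : maxAbove k hk (fun i => v k * q i - pstar i) = v k * q i - pstar i := heq
        rw [this]
        linarith
      · have hk' : (k : ℕ) = n - 1 := by have := k.2; omega
        have : k = ⟨n - 1, by omega⟩ := Fin.ext hk'
        rw [this, hlast]; exact hIR _
  exact Finset.sum_le_sum fun j _ => key (n - 1 - (j : ℕ)) j le_rfl
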